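/- arXiv:1401.2751 — 8 statements merged into one kernel-verified Lean document; each statement's English description precedes it below -/
import Mathlib

section
/- Suppose the projection functors U_𝐆 : PAttG ⥤ 𝐆 and U_𝐀 : PAttG ⥤ 𝐀 and the functors S : 𝐆 ⥤ Type and T : 𝐀 ⥤ Type all preserve pullbacks, and that S preserves pushouts. Let ((l, id_A), (r, id_A)) be a rewriting rule with attributes in A, with structures (L, A, att_L), (K, A, att_K), (R, A, att_R), and let (m_L, a) : (L, A, att_L) → (G, A₁, att_G) be a matching. If, in 𝐆, the square given by m_K : K → D and l₁ : D → G is a final pullback complement of m_L along l, and the square given by m_R : R → H and r₁ : D → H is a pushout of r : K → R and m_K : K → D, then there exist partial functions att_D : S(D) ⇀ T(A₁) and att_H : S(H) ⇀ T(A₁) such that, in PAttG, the square given by (m_K, a) : (K, A, att_K) → (D, A₁, att_D) and (l₁, id_{A₁}) : (D, A₁, att_D) → (G, A₁, att_G) is a final pullback complement of (m_L, a) along (l, id_A), the square given by (m_R, a) : (R, A, att_R) → (H, A₁, att_H) and (r₁, id_{A₁}) : (D, A₁, att_D) → (H, A₁, att_H) is a pushout of (r, id_A) and (m_K, a), and (m_R,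 a) is a matching. -/
open CategoryTheory CategoryTheory.Limits

universe w v u v' u'

namespace AttStruct

variable {𝒢 : Type u} [Category.{v} 𝒢] {𝒜 : Type u'} [Category.{v'} 𝒜]

/-- A partially attributed structure. -/
structure PAttGObj (S : 𝒢 ⥤ Type w) (T : 𝒜 ⥤ Type w) : Type _ where
  base : 𝒢
  attr : 𝒜
  att : S.obj base →. T.obj attr

variable {S : 𝒢 ⥤ Type w} {T : 𝒜 ⥤ Type w}

/-- A morphism of partially attributed structures. -/
@[ext]
structure PAttGHom (X Y : PAttGObj S T) : Type _ where
  g : X.base ⟶ Y.base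
  a : X.attr ⟶ Y.attr
  cond : ∀ (x : S.obj X.base) (t : T.obj X.attr), t ∈ X.att x →
    T.map a t ∈ Y.att (S.map g x)

instance : Category (PAttGObj S T) where
  Hom := PAttGHom
  id X := ⟨𝟙 X.base, 𝟙 X.attr, by intro x t ht; simpa using ht⟩
  comp {X Y Z} f g := ⟨f.g ≫ g.g, f.a ≫ g.a, by
    intro x t ht
    have h2 := PAttGHom.cond g _ _ (PAttGHom.cond f x t ht)
    simpa [FunctorToTypes.map_comp_apply] using h2⟩
  id_comp f := by apply PAttGHom.ext <;> simp
  comp_id f := by apply PAttGHom.ext <;> simp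
  assoc f g h := by apply PAttGHom.ext <;> simp


@[simp] lemma PAttGHom.id_g (X : PAttGObj S T) : PAttGHom.g (𝟙 X) = 𝟙 X.base := rfl
@[simp] lemma PAttGHom.id_a (X : PAttGObj S T) : PAttGHom.a (𝟙 X) = 𝟙 X.attr := rfl
@[simp] lemma PAttGHom.comp_g {X Y Z : PAttGObj S T} (f : X ⟶ Y) (g : Y ⟶ Z) :
    PAttGHom.g (f ≫ g) = PAttGHom.g f ≫ PAttGHom.g g := rfl
@[simp] lemma PAttGHom.comp_a {X Y Z : PAttGObj S T} (f : X ⟶ Y) (g : Y ⟶ Z) :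
    PAttGHom.a (f ≫ g) = PAttGHom.a f ≫ PAttGHom.a g := rfl

/-- A morphism is strict if attributes are reflected as well as preserved. -/
def PAttGHom.Strict {X Y : PAttGObj S T} (f : PAttGHom X Y) : Prop :=
  ∀ x : S.obj X.base, Y.att (S.map f.g x) = (X.att x).map (T.map f.a)

/-- A matching is a strict morphism which is injective on structures. -/
def PAttGHom.Matching {X Y : PAttGObj S T} (f : PAttGHom X Y) : Prop :=
  f.Strict ∧ Function.Injective (S.map f.g)

/-- The underlying-structure projection functor. -/
def UG (S : 𝒢 ⥤ Type w) (T : 𝒜 ⥤ Type w) : PAttGObj S T ⥤ 𝒢 where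
  obj X := X.base
  map f := f.g

/-- The underlying-attributes projection functor. -/
def UA (S : 𝒢 ⥤ Type w) (T : 𝒜 ⥤ Type w) : PAttGObj S T ⥤ 𝒜 where
  obj X := X.attr
  map f := f.a

/-- Final pullback complement. -/
structure IsFPBC {𝒞 : Type*} [Category 𝒞] {K L D G : 𝒞}
    (l : K ⟶ L) (mL : L ⟶ G) (mK : K ⟶ D) (l₁ : D ⟶ G) : Prop where
  isPullback : IsPullback l mK mL l₁
  final : ∀ {K' D' : 𝒞} (l' : K' ⟶ L) (m' : K' ⟶ D') (l'₁ : D' ⟶ G),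
    IsPullback l' m' mL l'₁ → ∀ f : K' ⟶ K, f ≫ l = l' →
      ∃! f₁ : D' ⟶ D, f₁ ≫ l₁ = l'₁ ∧ m' ≫ f₁ = f ≫ mK

/-!
Pullbacks and pushouts in `PAttG` lie over pullbacks and pushouts in `𝒢` and `𝒜`; on top of that,
a square is a pullback when an attribute is present as soon as both of its images are, and a
pushout when every attribute comes from one of the two legs. Since `S(m_L)` is injective, so is
its pullback `S(m_K)`, and `D` is attributed by transporting `att_K` along `(m_K, a)` and giving
every other element of `D` the attribute of its image in `G`. Then `H` is attributed through the
pushout `S(H)` in `Type`, by `att_R` on `S(R)` and by `att_D` outside the image of `S(m_K)`.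
Finality reduces to finality in `𝒢`: an attribute of `D'` over an element `m_K(k)` lifts, through
the pullback `K'`, to an attribute of `K'`, which `f` sends into `att_K(k)`.
-/

namespace PAttGHom

variable {X Y : PAttGObj S T}

@[ext]
lemma hom_ext {f f' : X ⟶ Y} (hg : f.g = f'.g) (ha : f.a = f'.a) : f = f' :=
  PAttGHom.ext hg ha

end PAttGHom

theorem isPullback_of_components {X Y Z W : PAttGObj S T}
    {f : X ⟶ Y} {g : X ⟶ Z} {h : Y ⟶ W} {k : Z ⟶ W} (w : f ≫ h = g ≫ k)
    (hg : IsPullback f.g g.g h.g k.g) (ha : IsPullback f.a g.a h.a k.a)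
    (hatt : ∀ x t, T.map f.a t ∈ Y.att (S.map f.g x) → T.map g.a t ∈ Z.att (S.map g.g x) →
      t ∈ X.att x) :
    IsPullback f g h k := by
  refine .of_isLimit (PullbackCone.IsLimit.mk w (fun s =>
    ⟨hg.lift s.fst.g s.snd.g (congrArg PAttGHom.g s.condition),
      ha.lift s.fst.a s.snd.a (congrArg PAttGHom.a s.condition), fun x t ht => hatt _ _ ?_ ?_⟩)
    (fun s => ?_) (fun s => ?_) (fun s m hm₁ hm₂ => ?_))
  · rw [← Functor.map_comp_apply, ← Functor.map_comp_apply, hg.lift_fst, ha.lift_fst]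
    exact s.fst.cond x t ht
  · rw [← Functor.map_comp_apply, ← Functor.map_comp_apply, hg.lift_snd, ha.lift_snd]
    exact s.snd.cond x t ht
  · ext
    · exact hg.lift_fst _ _ _
    · exact ha.lift_fst _ _ _
  · ext
    · exact hg.lift_snd _ _ _
    · exact ha.lift_snd _ _ _
  · ext
    · exact hg.hom_ext (by simpa using congrArg PAttGHom.g hm₁)
        (by simpa using congrArg PAttGHom.g hm₂)
    · exact ha.hom_ext (by simpa using congrArg PAttGHom.a hm₁)
        (by simpa using congrArg PAttGHom.a hm₂)

theorem mem_att_of_isPullback [PreservesLimitsOfShape WalkingCospan (UG S T)]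
    [PreservesLimitsOfShape WalkingCospan (UA S T)] {X Y Z W : PAttGObj S T}
    {f : X ⟶ Y} {g : X ⟶ Z} {h : Y ⟶ W} {k : Z ⟶ W} (sq : IsPullback f g h k)
    {x : S.obj X.base} {t : T.obj X.attr} (hf : T.map f.a t ∈ Y.att (S.map f.g x))
    (hg : T.map g.a t ∈ Z.att (S.map g.g x)) : t ∈ X.att x := by
  -- `P` is `X` with all attributes removed except `t` at `x`; the comparison `P ⟶ X` lies over
  -- identities because `UG` and `UA` preserve the pullback.
  let P : PAttGObj S T := ⟨X.base, X.attr, fun x' => ⟨x' = x, fun _ => t⟩⟩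
  have memP : ∀ {x' t'}, t' ∈ P.att x' → x' = x ∧ t' = t := fun ⟨hx, ht⟩ => ⟨hx, ht.symm⟩
  let pf : P ⟶ Y := ⟨f.g, f.a, fun x' t' ht' => by rwa [(memP ht').1, (memP ht').2]⟩
  let pg : P ⟶ Z := ⟨g.g, g.a, fun x' t' ht' => by rwa [(memP ht').1, (memP ht').2]⟩
  have hw : pf ≫ h = pg ≫ k := by
    ext
    exacts [(congrArg PAttGHom.g sq.w :), (congrArg PAttGHom.a sq.w :)]
  let u : P ⟶ X := sq.lift pf pg hw
  have hug : u.g = 𝟙 X.base := (sq.map (UG S T)).hom_ext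
    ((congrArg PAttGHom.g (sq.lift_fst pf pg hw)).trans (Category.id_comp _).symm)
    ((congrArg PAttGHom.g (sq.lift_snd pf pg hw)).trans (Category.id_comp _).symm)
  have hua : u.a = 𝟙 X.attr := (sq.map (UA S T)).hom_ext
    ((congrArg PAttGHom.a (sq.lift_fst pf pg hw)).trans (Category.id_comp _).symm)
    ((congrArg PAttGHom.a (sq.lift_snd pf pg hw)).trans (Category.id_comp _).symm)
  have := u.cond x t ⟨rfl, rfl⟩
  rwa [hug, hua, Functor.map_id_apply, Functor.map_id_apply] at this

theorem isPushout_of_components {X Y Z W : PAttGObj S T}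
    {f : X ⟶ Y} {g : X ⟶ Z} {h : Y ⟶ W} {k : Z ⟶ W} (w : f ≫ h = g ≫ k)
    (hg : IsPushout f.g g.g h.g k.g) (ha : IsPushout f.a g.a h.a k.a)
    (hatt : ∀ w t, t ∈ W.att w →
      (∃ y u, u ∈ Y.att y ∧ S.map h.g y = w ∧ T.map h.a u = t) ∨
      (∃ z u, u ∈ Z.att z ∧ S.map k.g z = w ∧ T.map k.a u = t)) :
    IsPushout f g h k := by
  refine .of_isColimit (PushoutCocone.IsColimit.mk w (fun s =>
    ⟨hg.desc s.inl.g s.inr.g (congrArg PAttGHom.g s.condition),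
      ha.desc s.inl.a s.inr.a (congrArg PAttGHom.a s.condition), fun x t ht => ?_⟩)
    (fun s => ?_) (fun s => ?_) (fun s m hm₁ hm₂ => ?_))
  · rcases hatt x t ht with ⟨y, u, hu, rfl, rfl⟩ | ⟨z, u, hu, rfl, rfl⟩
    · simpa only [← Functor.map_comp_apply, hg.inl_desc, ha.inl_desc] using s.inl.cond y u hu
    · simpa only [← Functor.map_comp_apply, hg.inr_desc, ha.inr_desc] using s.inr.cond z u hu
  · ext
    · exact hg.inl_desc _ _ _
    · exact ha.inl_desc _ _ _
  · ext
    · exact hg.inr_desc _ _ _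
    · exact ha.inr_desc _ _ _
  · ext
    · exact hg.hom_ext (by simpa using congrArg PAttGHom.g hm₁)
        (by simpa using congrArg PAttGHom.g hm₂)
    · exact ha.hom_ext (by simpa using congrArg PAttGHom.a hm₁)
        (by simpa using congrArg PAttGHom.a hm₂)

theorem Types.exists_desc_of_isPushout {X₁ X₂ X₃ X₄ : Type w} {t : X₁ ⟶ X₂} {l : X₁ ⟶ X₃}
    {r : X₂ ⟶ X₄} {b : X₃ ⟶ X₄} (h : IsPushout t l r b) {β : Type w} (φ : X₂ → β) (ψ : X₃ → β)
    (hw : ∀ x, φ (t x) = ψ (l x)) :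
    ∃ χ : X₄ → β, (∀ x, χ (r x) = φ x) ∧ ∀ x, χ (b x) = ψ x :=
  ⟨h.desc (↾φ) (↾ψ) (by ext x; exact hw x), ConcreteCategory.congr_hom (h.inl_desc _ _ _),
    ConcreteCategory.congr_hom (h.inr_desc _ _ _)⟩

section Rewriting

variable {A A₁ : 𝒜} {Ko Lo Ro Go Do Ho : 𝒢} {attK : S.obj Ko →. T.obj A}
  {attL : S.obj Lo →. T.obj A} {attR : S.obj Ro →. T.obj A} {attG : S.obj Go →. T.obj A₁}
  {attD : S.obj Do →. T.obj A₁}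

theorem PAttGHom.mem_att_of_a_eq_id (f : (⟨Ko, A, attK⟩ : PAttGObj S T) ⟶ ⟨Lo, A, attL⟩)
    (hfa : f.a = 𝟙 A) {k : S.obj Ko} {t : T.obj A} (ht : t ∈ attK k) :
    t ∈ attL (S.map f.g k) := by
  simpa [hfa] using f.cond k t ht

theorem PAttGHom.Strict.mem_att_iff {X Y : PAttGObj S T} {f : X ⟶ Y} (hf : f.Strict)
    {x : S.obj X.base} {t : T.obj Y.attr} :
    t ∈ Y.att (S.map f.g x) ↔ ∃ u ∈ X.att x, T.map f.a u = t := by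
  rw [hf x, Part.mem_map_iff]

theorem isPullback_of_strict (lm : (⟨Ko, A, attK⟩ : PAttGObj S T) ⟶ ⟨Lo, A, attL⟩)
    (hlma : lm.a = 𝟙 A) (mLm : (⟨Lo, A, attL⟩ : PAttGObj S T) ⟶ ⟨Go, A₁, attG⟩)
    (mKp : (⟨Ko, A, attK⟩ : PAttGObj S T) ⟶ ⟨Do, A₁, attD⟩) (hmK : mKp.Strict)
    (hmKa : mKp.a = mLm.a) (l₁p : (⟨Do, A₁, attD⟩ : PAttGObj S T) ⟶ ⟨Go, A₁, attG⟩)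
    (hl₁a : l₁p.a = 𝟙 A₁) (hg : IsPullback lm.g mKp.g mLm.g l₁p.g) :
    IsPullback lm mKp mLm l₁p := by
  refine isPullback_of_components (by ext; exacts [hg.w, by simp [hlma, hmKa, hl₁a]]) hg
    ?_ fun k t hL hD => ?_
  · rw [hlma, hmKa, hl₁a]
    exact .of_horiz_isIso ⟨by simp⟩
  · obtain ⟨u, hu, -⟩ := hmK.mem_att_iff.1 hD
    rw [hlma, Functor.map_id_apply] at hL
    have := Part.mem_unique hL (lm.mem_att_of_a_eq_id hlma hu)
    rwa [this]

theorem isFPBC_of_strict [PreservesLimitsOfShape WalkingCospan (UG S T)]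
    [PreservesLimitsOfShape WalkingCospan (UA S T)] [PreservesLimitsOfShape WalkingCospan S]
    [PreservesLimitsOfShape WalkingCospan T]
    (lm : (⟨Ko, A, attK⟩ : PAttGObj S T) ⟶ ⟨Lo, A, attL⟩) (hlma : lm.a = 𝟙 A)
    (mLm : (⟨Lo, A, attL⟩ : PAttGObj S T) ⟶ ⟨Go, A₁, attG⟩) (hmL : mLm.Strict)
    (mKp : (⟨Ko, A, attK⟩ : PAttGObj S T) ⟶ ⟨Do, A₁, attD⟩) (hmK : mKp.Matching)
    (hmKa : mKp.a = mLm.a) (l₁p : (⟨Do, A₁, attD⟩ : PAttGObj S T) ⟶ ⟨Go, A₁, attG⟩)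
    (hl₁a : l₁p.a = 𝟙 A₁) (hD : ∀ d ∉ Set.range (S.map mKp.g), attD d = attG (S.map l₁p.g d))
    (hfpbc : IsFPBC lm.g mLm.g mKp.g l₁p.g) :
    IsFPBC lm mLm mKp l₁p := by
  refine ⟨isPullback_of_strict lm hlma mLm mKp hmK.1 hmKa l₁p hl₁a hfpbc.isPullback, ?_⟩
  intro K' D' l' m' l'₁ hsq f hf
  have hfa : f.a = l'.a := by simpa [hlma] using congrArg PAttGHom.a hf
  have hsqG : IsPullback l'.g m'.g mLm.g l'₁.g := hsq.map (UG S T)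
  have hsqA : IsPullback l'.a m'.a mLm.a l'₁.a := hsq.map (UA S T)
  obtain ⟨f₁, ⟨hf₁l, hf₁m⟩, hf₁uniq⟩ :=
    hfpbc.final l'.g m'.g l'₁.g hsqG f.g (congrArg PAttGHom.g hf)
  have hcond : ∀ d t, t ∈ D'.att d → T.map l'₁.a t ∈ attD (S.map f₁ d) := by
    intro d t ht
    have hl₁ : S.map l₁p.g (S.map f₁ d) = S.map l'₁.g d := by
      rw [← Functor.map_comp_apply, hf₁l]
    by_cases hd : S.map f₁ d ∈ Set.range (S.map mKp.g)
    swap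
    · rw [hD _ hd, hl₁]
      exact l'₁.cond d t ht
    obtain ⟨k, hk⟩ := hd
    have hkL : S.map mLm.g (S.map lm.g k) = S.map l'₁.g d := by
      rw [← hl₁, ← hk, ← Functor.map_comp_apply, ← Functor.map_comp_apply, hfpbc.isPullback.w]
    obtain ⟨v, hv, hvt⟩ := hmL.mem_att_iff.1 (hkL ▸ l'₁.cond d t ht)
    obtain ⟨k', hk'l, hk'm⟩ := Types.exists_of_isPullback (hsqG.map S) _ _ hkL
    obtain ⟨s, hsl, hsm⟩ := Types.exists_of_isPullback (hsqA.map T) _ _ hvt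
    have hs : s ∈ K'.att k' := mem_att_of_isPullback hsq (hsl ▸ hk'l ▸ hv) (hsm ▸ hk'm ▸ ht)
    have hfk : S.map f.g k' = k := hmK.2 <| by
      rw [hk, ← hk'm, ← Functor.map_comp_apply, ← Functor.map_comp_apply, hf₁m]
    rw [← hk]
    refine hmK.1.mem_att_iff.2 ⟨v, ?_, hmKa ▸ hvt⟩
    simpa only [hfk, hfa, hsl] using f.cond k' s hs
  refine ⟨⟨f₁, l'₁.a, hcond⟩, ⟨?_, ?_⟩, fun y hy => ?_⟩
  · ext
    exacts [hf₁l, by simp [hl₁a]]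
  · ext
    exacts [hf₁m, by simpa [hfa, hmKa] using (congrArg PAttGHom.a hsq.w).symm]
  · ext
    · exact hf₁uniq y.g ⟨congrArg PAttGHom.g hy.1, congrArg PAttGHom.g hy.2⟩
    · simpa [hl₁a] using congrArg PAttGHom.a hy.1

theorem exists_isFPBC_of_matching [PreservesLimitsOfShape WalkingCospan (UG S T)]
    [PreservesLimitsOfShape WalkingCospan (UA S T)] [PreservesLimitsOfShape WalkingCospan S]
    [PreservesLimitsOfShape WalkingCospan T]
    (lm : (⟨Ko, A, attK⟩ : PAttGObj S T) ⟶ ⟨Lo, A, attL⟩) (hlma : lm.a = 𝟙 A)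
    (mLm : (⟨Lo, A, attL⟩ : PAttGObj S T) ⟶ ⟨Go, A₁, attG⟩) (hmL : mLm.Matching)
    {mK : Ko ⟶ Do} {l₁ : Do ⟶ Go} (hfpbc : IsFPBC lm.g mLm.g mK l₁) :
    ∃ (attD : S.obj Do →. T.obj A₁) (mKp : (⟨Ko, A, attK⟩ : PAttGObj S T) ⟶ ⟨Do, A₁, attD⟩)
      (l₁p : (⟨Do, A₁, attD⟩ : PAttGObj S T) ⟶ ⟨Go, A₁, attG⟩),
      mKp.g = mK ∧ mKp.a = mLm.a ∧ l₁p.g = l₁ ∧ l₁p.a = 𝟙 A₁ ∧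
      IsFPBC lm mLm mKp l₁p ∧ mKp.Matching := by
  classical
  have hK : Function.Injective (S.map mK) := (mono_iff_injective _).1 <|
    (hfpbc.isPullback.map S).mono_snd_of_mono ((mono_iff_injective _).2 hmL.2)
  let attD : S.obj Do →. T.obj A₁ :=
    Function.extend (S.map mK) (fun k => (attK k).map (T.map mLm.a)) (fun d => attG (S.map l₁ d))
  have hmK : ∀ k, attD (S.map mK k) = (attK k).map (T.map mLm.a) := hK.extend_apply _ _
  have hoff : ∀ d ∉ Set.range (S.map mK), attD d = attG (S.map l₁ d) :=
    fun d hd => Function.extend_apply' _ _ _ hd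
  let mKp : (⟨Ko, A, attK⟩ : PAttGObj S T) ⟶ ⟨Do, A₁, attD⟩ :=
    ⟨mK, mLm.a, fun k t ht => by
      change _ ∈ attD _
      rw [hmK]
      exact Part.mem_map _ ht⟩
  let l₁p : (⟨Do, A₁, attD⟩ : PAttGObj S T) ⟶ ⟨Go, A₁, attG⟩ := ⟨l₁, 𝟙 A₁, fun d t ht => by
    rw [Functor.map_id_apply]
    by_cases hd : ∃ k, S.map mK k = d
    · obtain ⟨k, rfl⟩ := hd
      change t ∈ attD _ at ht
      rw [hmK] at ht
      obtain ⟨u, hu, rfl⟩ := (Part.mem_map_iff _).1 ht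
      rw [← Functor.map_comp_apply, ← hfpbc.isPullback.w, Functor.map_comp_apply, hmL.1]
      exact Part.mem_map _ (lm.mem_att_of_a_eq_id hlma hu)
    · change t ∈ attD d at ht
      rwa [hoff d hd] at ht⟩
  have hmKp : mKp.Matching := ⟨hmK, hK⟩
  exact ⟨attD, mKp, l₁p, rfl, rfl, rfl, rfl,
    isFPBC_of_strict lm hlma mLm hmL.1 mKp hmKp rfl l₁p rfl hoff hfpbc, hmKp⟩

theorem exists_isPushout_of_matching [PreservesColimitsOfShape WalkingSpan S]
    (rm : (⟨Ko, A, attK⟩ : PAttGObj S T) ⟶ ⟨Ro, A, attR⟩) (hrma : rm.a = 𝟙 A)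
    (mKp : (⟨Ko, A, attK⟩ : PAttGObj S T) ⟶ ⟨Do, A₁, attD⟩) (hmK : mKp.Matching)
    {mR : Ro ⟶ Ho} {r₁ : Do ⟶ Ho} (hpo : IsPushout rm.g mKp.g mR r₁) :
    ∃ (attH : S.obj Ho →. T.obj A₁) (mRp : (⟨Ro, A, attR⟩ : PAttGObj S T) ⟶ ⟨Ho, A₁, attH⟩)
      (r₁p : (⟨Do, A₁, attD⟩ : PAttGObj S T) ⟶ ⟨Ho, A₁, attH⟩),
      mRp.g = mR ∧ mRp.a = mKp.a ∧ r₁p.g = r₁ ∧ r₁p.a = 𝟙 A₁ ∧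
      IsPushout rm mKp mRp r₁p ∧ mRp.Matching := by
  classical
  have hpoS := hpo.map S
  -- On the image of `S(m_K)` the attributes of `R` replace those of `D`, making `attD'`
  -- compatible with `attR` over `S(K)`; off that image it is `attD`.
  let attD' : S.obj Do →. T.obj A₁ := Function.extend (S.map mKp.g)
    (fun k => (attR (S.map rm.g k)).map (T.map mKp.a)) attD
  have hK' : ∀ k, attD' (S.map mKp.g k) = (attR (S.map rm.g k)).map (T.map mKp.a) :=
    hmK.2.extend_apply _ _
  have hoff : ∀ d ∉ Set.range (S.map mKp.g), attD' d = attD d :=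
    fun d hd => Function.extend_apply' _ _ _ hd
  obtain ⟨attH, hR, hD⟩ := Types.exists_desc_of_isPushout hpoS (β := Part (T.obj A₁))
    (fun x => (attR x).map (T.map mKp.a)) attD' fun k => (hK' k).symm
  let mRp : (⟨Ro, A, attR⟩ : PAttGObj S T) ⟶ ⟨Ho, A₁, attH⟩ :=
    ⟨mR, mKp.a, fun x t ht => by
      change _ ∈ attH _
      rw [hR]
      exact Part.mem_map _ ht⟩
  let r₁p : (⟨Do, A₁, attD⟩ : PAttGObj S T) ⟶ ⟨Ho, A₁, attH⟩ := ⟨r₁, 𝟙 A₁, fun d t ht => by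
    change _ ∈ attH _
    rw [Functor.map_id_apply, hD]
    by_cases hd : ∃ k, S.map mKp.g k = d
    · obtain ⟨k, rfl⟩ := hd
      obtain ⟨u, hu, rfl⟩ := hmK.1.mem_att_iff.1 ht
      rw [hK']
      exact Part.mem_map _ (rm.mem_att_of_a_eq_id hrma hu)
    · rwa [hoff d hd]⟩
  have hmR : mRp.Matching :=
    ⟨hR, Types.pushoutCocone_inr_injective_of_isColimit hpoS.flip.isColimit hmK.2⟩
  refine ⟨attH, mRp, r₁p, rfl, rfl, rfl, rfl, isPushout_of_components ?_ hpo ?_ ?_, hmR⟩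
  · ext
    exacts [hpo.w, by simp [hrma, mRp, r₁p]]
  · show IsPushout rm.a mKp.a mKp.a (𝟙 A₁)
    rw [hrma]
    exact .of_horiz_isIso ⟨by simp⟩
  · intro h t ht
    rcases Types.eq_or_eq_of_isPushout' hpoS h with ⟨x, rfl⟩ | ⟨d, rfl, hd⟩
    · obtain ⟨u, hu, rfl⟩ := hmR.1.mem_att_iff.1 ht
      exact Or.inl ⟨x, u, hu, rfl, rfl⟩
    · change t ∈ attH _ at ht
      rw [hD, hoff d hd] at ht
      exact Or.inr ⟨d, t, ht, rfl, Functor.map_id_apply T A₁ t⟩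

end Rewriting

theorem sqpo_lifting_general
    [PreservesLimitsOfShape WalkingCospan (UG S T)]
    [PreservesLimitsOfShape WalkingCospan (UA S T)]
    [PreservesLimitsOfShape WalkingCospan S]
    [PreservesLimitsOfShape WalkingCospan T]
    [PreservesColimitsOfShape WalkingSpan S]
    (A A₁ : 𝒜) (Lo Ko Ro Go Do Ho : 𝒢)
    (attL : S.obj Lo →. T.obj A) (attK : S.obj Ko →. T.obj A)
    (attR : S.obj Ro →. T.obj A) (attG : S.obj Go →. T.obj A₁)
    (lm : (⟨Ko, A, attK⟩ : PAttGObj S T) ⟶ ⟨Lo, A, attL⟩)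
    (hlma : PAttGHom.a lm = 𝟙 A)
    (rm : (⟨Ko, A, attK⟩ : PAttGObj S T) ⟶ ⟨Ro, A, attR⟩)
    (hrma : PAttGHom.a rm = 𝟙 A)
    (mLm : (⟨Lo, A, attL⟩ : PAttGObj S T) ⟶ ⟨Go, A₁, attG⟩)
    (hmatch : PAttGHom.Matching mLm)
    (mK : Ko ⟶ Do) (l₁ : Do ⟶ Go) (mR : Ro ⟶ Ho) (r₁ : Do ⟶ Ho)
    (hfpbc : IsFPBC (PAttGHom.g lm) (PAttGHom.g mLm) mK l₁)
    (hpo : IsPushout (PAttGHom.g rm) mK mR r₁) :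
    ∃ (attD : S.obj Do →. T.obj A₁) (attH : S.obj Ho →. T.obj A₁)
      (mKp : (⟨Ko, A, attK⟩ : PAttGObj S T) ⟶ ⟨Do, A₁, attD⟩)
      (l₁p : (⟨Do, A₁, attD⟩ : PAttGObj S T) ⟶ ⟨Go, A₁, attG⟩)
      (mRp : (⟨Ro, A, attR⟩ : PAttGObj S T) ⟶ ⟨Ho, A₁, attH⟩)
      (r₁p : (⟨Do, A₁, attD⟩ : PAttGObj S T) ⟶ ⟨Ho, A₁, attH⟩),
      PAttGHom.g mKp = mK ∧ PAttGHom.a mKp = PAttGHom.a mLm ∧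
      PAttGHom.g l₁p = l₁ ∧ PAttGHom.a l₁p = 𝟙 A₁ ∧
      PAttGHom.g mRp = mR ∧ PAttGHom.a mRp = PAttGHom.a mLm ∧
      PAttGHom.g r₁p = r₁ ∧ PAttGHom.a r₁p = 𝟙 A₁ ∧
      IsFPBC lm mLm mKp l₁p ∧
      IsPushout rm mKp mRp r₁p ∧
      PAttGHom.Matching mRp := by
  obtain ⟨attD, mKp, l₁p, rfl, hmKa, rfl, hl₁a, hfpbcP, hmKp⟩ :=
    exists_isFPBC_of_matching lm hlma mLm hmatch hfpbc
  obtain ⟨attH, mRp, r₁p, rfl, hmRa, rfl, hr₁a, hpoP, hmRp⟩ :=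
    exists_isPushout_of_matching rm hrma mKp hmKp hpo
  exact ⟨attD, attH, mKp, l₁p, mRp, r₁p, rfl, hmKa, rfl, hl₁a, rfl, hmRa.trans hmKa, rfl, hr₁a,
    hfpbcP, hpoP, hmRp⟩

/-- Lifting of sesqui-pushout rewriting steps from `𝒢` to `PAttG`: given a rewriting
rule `((l, 𝟙 A), (r, 𝟙 A))` with totally attributed `L` and `R`, a matching
`(m_L, a)`, a final pullback complement of `m_L` along `l` and a pushout of `r` and
`m_K` in `𝒢`, there are partial attributions `att_D`, `att_H` such that the
corresponding squares in `PAttG` form a final pullback complement and a pushout,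
and `(m_R, a)` is a matching. -/
theorem sqpo_lifting
    [PreservesLimitsOfShape WalkingCospan (UG S T)]
    [PreservesLimitsOfShape WalkingCospan (UA S T)]
    [PreservesLimitsOfShape WalkingCospan S]
    [PreservesLimitsOfShape WalkingCospan T]
    [PreservesColimitsOfShape WalkingSpan S]
    (A A₁ : 𝒜) (Lo Ko Ro Go Do Ho : 𝒢)
    (attL : S.obj Lo →. T.obj A) (attK : S.obj Ko →. T.obj A)
    (attR : S.obj Ro →. T.obj A) (attG : S.obj Go →. T.obj A₁)
    (hLtot : ∀ x : S.obj Lo, (attL x).Dom)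
    (hRtot : ∀ x : S.obj Ro, (attR x).Dom)
    (lm : (⟨Ko, A, attK⟩ : PAttGObj S T) ⟶ ⟨Lo, A, attL⟩)
    (hlma : PAttGHom.a lm = 𝟙 A)
    (rm : (⟨Ko, A, attK⟩ : PAttGObj S T) ⟶ ⟨Ro, A, attR⟩)
    (hrma : PAttGHom.a rm = 𝟙 A)
    (mLm : (⟨Lo, A, attL⟩ : PAttGObj S T) ⟶ ⟨Go, A₁, attG⟩)
    (hmatch : PAttGHom.Matching mLm)
    (mK : Ko ⟶ Do) (l₁ : Do ⟶ Go) (mR : Ro ⟶ Ho) (r₁ : Do ⟶ Ho)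
    (hfpbc : IsFPBC (PAttGHom.g lm) (PAttGHom.g mLm) mK l₁)
    (hpo : IsPushout (PAttGHom.g rm) mK mR r₁) :
    ∃ (attD : S.obj Do →. T.obj A₁) (attH : S.obj Ho →. T.obj A₁)
      (mKp : (⟨Ko, A, attK⟩ : PAttGObj S T) ⟶ ⟨Do, A₁, attD⟩)
      (l₁p : (⟨Do, A₁, attD⟩ : PAttGObj S T) ⟶ ⟨Go, A₁, attG⟩)
      (mRp : (⟨Ro, A, attR⟩ : PAttGObj S T) ⟶ ⟨Ho, A₁, attH⟩)
      (r₁p : (⟨Do, A₁, attD⟩ : PAttGObj S T) ⟶ ⟨Ho, A₁, attH⟩),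
      PAttGHom.g mKp = mK ∧ PAttGHom.a mKp = PAttGHom.a mLm ∧
      PAttGHom.g l₁p = l₁ ∧ PAttGHom.a l₁p = 𝟙 A₁ ∧
      PAttGHom.g mRp = mR ∧ PAttGHom.a mRp = PAttGHom.a mLm ∧
      PAttGHom.g r₁p = r₁ ∧ PAttGHom.a r₁p = 𝟙 A₁ ∧
      IsFPBC lm mLm mKp l₁p ∧
      IsPushout rm mKp mRp r₁p ∧
      PAttGHom.Matching mRp :=
  sqpo_lifting_general A A₁ Lo Ko Ro Go Do Ho attL attK attR attG lm hlma rm hrma mLm hmatch mK l₁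
    mR r₁ hfpbc hpo

end AttStruct
end

section
/- Suppose the functor S : 𝐆 ⥤ Type preserves pushouts. Let (r, id_A) : (K, A, att_K) → (R, A, att_R) be a PAttG-morphism and let (m_K, a) : (K, A, att_K) → (D, A₁, att_D) be a matching; write C for the complement of the range of S(m_K) in S(D). Let m_R : R → H and r₁ : D → H form a pushout in 𝐆 of r : K → R and m_K : K → D. Then S(m_R) is injective, S(r₁) ∘ S(m_K) = S(m_R) ∘ S(r), and S(r₁) restricts to a bijection from C onto the complement of the range of S(m_R) in S(H). Define att_H : S(H) ⇀ T(A₁) by att_H(S(m_R)(y)) = T(a)(att_R(y)) for y ∈ dom(att_R) and att_H(S(r₁)(x)) = att_D(x) for x ∈ C with x ∈ dom(att_D), and undefined elsewhere. Then (m_R, a) : (R, A, att_R) → (H, A₁, att_H) is a matching, (r₁, id_{A₁}) : (D, A₁, att_D) → (H, A₁, att_H) is a PAttG-morphism, and the square given by (m_R, a) and (r₁, id_{A₁}) is a pushout of (r, id_A) and (m_K, a) in PAttG. -/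
open CategoryTheory CategoryTheory.Limits

universe w v u v' u'

namespace AttStruct

variable {𝒢 : Type u} [Category.{v} 𝒢] {𝒜 : Type u'} [Category.{v'} 𝒜]

variable {S : 𝒢 ⥤ Type w} {T : 𝒜 ⥤ Type w}

/-!
Since `S` preserves the pushout and `S(m_K)` is injective, `S(H)` is the disjoint union of the
image of `S(m_R)` and the image under `S(r₁)` of the complement `C` of the range of `S(m_K)`,
the map `S(r₁)` being injective on `C` (pushouts along injections in `Type`). So `att_H` is the
least attribution making `m_R` and `r₁` morphisms; the required compatibility on the range of
`S(m_K)` comes from strictness of `(m_K, a)` and from `(r, 𝟙)` being a morphism. A square of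
partially attributed structures whose two components are pushouts and whose corner carries only
the forced attributes is a pushout, and the attribute square `(𝟙, a, a, 𝟙)` is trivially one.
-/

section TypesPushout

variable {X₁ X₂ X₃ X₄ : Type w} {t : X₁ ⟶ X₂} {l : X₁ ⟶ X₃} {r : X₂ ⟶ X₄}
  {b : X₃ ⟶ X₄}

/- Descend along the pushout to `Option X₃`, sending `X₂` and the range of `l` to `none`. -/
lemma _root_.CategoryTheory.Limits.Types.injOn_compl_range_of_isPushout
    (h : IsPushout t l r b) : Set.InjOn b (Set.range l)ᶜ := by
  classical
  let φ : X₃ → Option X₃ := fun x => if x ∈ Set.range l then none else some x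
  have hφ : t ≫ (↾fun _ => none) = l ≫ ↾φ := by ext; simp [φ]
  have hdesc (x : X₃) : h.desc _ _ hφ (b x) = φ x :=
    ConcreteCategory.congr_hom (h.inr_desc _ _ hφ) x
  intro x hx x' hx' hxx'
  have : φ x = φ x' := by rw [← hdesc, ← hdesc, hxx']
  simpa only [φ, if_neg hx, if_neg hx', Option.some.injEq] using this

lemma _root_.CategoryTheory.Limits.Types.bijOn_compl_range_of_isPushout
    (h : IsPushout t l r b) (hl : Function.Injective l) :
    Set.BijOn b (Set.range l)ᶜ (Set.range r)ᶜ := by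
  refine ⟨?_, Types.injOn_compl_range_of_isPushout h, ?_⟩
  · rintro x hx ⟨y, hy⟩
    obtain ⟨s, hs, -⟩ :=
      (Types.pushoutCocone_inl_eq_inr_iff_of_isColimit h.flip.isColimit hl x y).1 hy.symm
    exact hx ⟨s, hs⟩
  · intro z hz
    obtain ⟨y, rfl⟩ | ⟨x, rfl, hx⟩ := Types.eq_or_eq_of_isPushout' h z
    · exact absurd ⟨y, rfl⟩ hz
    · exact ⟨x, hx, rfl⟩

end TypesPushout

/-- Pushouts in `PAttGObj S T` are computed componentwise, the corner carrying the least
attribution that makes both legs morphisms. -/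
lemma isPushout_of_att_covered {K R D H : PAttGObj S T} {r : K ⟶ R} {m : K ⟶ D}
    {m' : R ⟶ H} {r' : D ⟶ H}
    (hg : IsPushout r.g m.g m'.g r'.g) (ha : IsPushout r.a m.a m'.a r'.a)
    (hatt : ∀ z t, t ∈ H.att z →
      (∃ y p, p ∈ R.att y ∧ S.map m'.g y = z ∧ T.map m'.a p = t) ∨
      (∃ x p, p ∈ D.att x ∧ S.map r'.g x = z ∧ T.map r'.a p = t)) :
    IsPushout r m m' r' := by
  have w : r ≫ m' = m ≫ r' := PAttGHom.ext hg.w ha.w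
  refine IsPushout.of_isColimit' ⟨w⟩ (PushoutCocone.IsColimit.mk w (fun s => ⟨
    hg.desc s.inl.g s.inr.g (congrArg PAttGHom.g s.condition),
    ha.desc s.inl.a s.inr.a (congrArg PAttGHom.a s.condition), ?_⟩) ?_ ?_ ?_)
  · intro z t ht
    rcases hatt z t ht with ⟨y, p, hp, rfl, rfl⟩ | ⟨x, p, hp, rfl, rfl⟩
    · simpa only [← Functor.map_comp_apply, IsPushout.inl_desc] using s.inl.cond y p hp
    · simpa only [← Functor.map_comp_apply, IsPushout.inr_desc] using s.inr.cond x p hp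
  · exact fun s => PAttGHom.ext (hg.inl_desc ..) (ha.inl_desc ..)
  · exact fun s => PAttGHom.ext (hg.inr_desc ..) (ha.inr_desc ..)
  · intro s φ hφl hφr
    refine PAttGHom.ext (hg.hom_ext ?_ ?_) (ha.hom_ext ?_ ?_)
    · simpa using congrArg PAttGHom.g hφl
    · simpa using congrArg PAttGHom.g hφr
    · simpa using congrArg PAttGHom.a hφl
    · simpa using congrArg PAttGHom.a hφr

section GluedAttribution

variable {K R D : PAttGObj S T} {r : K ⟶ R} {m : K ⟶ D} {a : R.attr ⟶ D.attr}
  {H : 𝒢} {mR : R.base ⟶ H} {r₁ : D.base ⟶ H} {attH : S.obj H →. T.obj D.attr}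
  (hH₁ : ∀ y, attH (S.map mR y) = (R.att y).map (T.map a))
  (hH₂ : ∀ x ∉ Set.range (S.map m.g), attH (S.map r₁ x) = D.att x)
include hH₁ hH₂

lemma mem_att_glue_of_mem_att (hm : m.Strict) (hra : r.a ≫ a = m.a)
    (hw : r.g ≫ mR = m.g ≫ r₁) {x : S.obj D.base} {t : T.obj D.attr} (ht : t ∈ D.att x) :
    t ∈ attH (S.map r₁ x) := by
  by_cases hx : x ∈ Set.range (S.map m.g)
  · obtain ⟨k, rfl⟩ := hx
    rw [hm k] at ht
    obtain ⟨p, hp, rfl⟩ := Part.mem_map_iff _ |>.1 ht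
    rw [← Functor.map_comp_apply, ← hw, Functor.map_comp_apply, hH₁, ← hra,
      Functor.map_comp_apply]
    exact Part.mem_map _ (r.cond k p hp)
  · rwa [hH₂ x hx]

lemma att_glue_covered
    (h : IsPushout (S.map r.g) (S.map m.g) (S.map mR) (S.map r₁)) {z : S.obj H}
    {t : T.obj D.attr} (ht : t ∈ attH z) :
    (∃ y p, p ∈ R.att y ∧ S.map mR y = z ∧ T.map a p = t) ∨
      (∃ x p, p ∈ D.att x ∧ S.map r₁ x = z ∧ T.map (𝟙 D.attr) p = t) := by
  obtain ⟨y, rfl⟩ | ⟨x, rfl, hx⟩ := Types.eq_or_eq_of_isPushout' h z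
  · rw [hH₁] at ht
    obtain ⟨p, hp, rfl⟩ := Part.mem_map_iff _ |>.1 ht
    exact .inl ⟨y, p, hp, rfl, rfl⟩
  · rw [hH₂ x hx] at ht
    exact .inr ⟨x, t, ht, rfl, by simp⟩

end GluedAttribution

/-- Lifting pushouts to partially attributed structures: given a rule morphism
`(r, 𝟙 A)`, a matching `(m_K, a)` and a pushout of `r` and `m_K` in `𝒢`,
`S(m_R)` is injective, the square commutes after applying `S`, `S(r₁)` restricts
to a bijection between the complements of the images, and for the partial
attribution `att_H` defined by `att_H(S(m_R)(y)) = T(a)(att_R(y))` and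
`att_H(S(r₁)(x)) = att_D(x)` for `x` outside the range of `S(m_K)` (undefined
elsewhere), `(m_R, a)` is a matching, `(r₁, 𝟙 A₁)` is a `PAttG`-morphism, and the
resulting square is a pushout in `PAttG`. -/
theorem pushout_lifting
    [PreservesColimitsOfShape WalkingSpan S]
    (A A₁ : 𝒜) (Ko Ro Do Ho : 𝒢)
    (attK : S.obj Ko →. T.obj A) (attR : S.obj Ro →. T.obj A)
    (attD : S.obj Do →. T.obj A₁)
    (rm : (⟨Ko, A, attK⟩ : PAttGObj S T) ⟶ ⟨Ro, A, attR⟩)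
    (hrma : PAttGHom.a rm = 𝟙 A)
    (mKm : (⟨Ko, A, attK⟩ : PAttGObj S T) ⟶ ⟨Do, A₁, attD⟩)
    (hmatch : PAttGHom.Matching mKm)
    (mR : Ro ⟶ Ho) (r₁ : Do ⟶ Ho)
    (hpo : IsPushout (PAttGHom.g rm) (PAttGHom.g mKm) mR r₁) :
    Function.Injective (S.map mR) ∧
    S.map r₁ ∘ S.map (PAttGHom.g mKm) = S.map mR ∘ S.map (PAttGHom.g rm) ∧
    Set.BijOn (S.map r₁)
      {x | x ∉ Set.range (S.map (PAttGHom.g mKm))}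
      {z | z ∉ Set.range (S.map mR)} ∧
    ∀ attH : S.obj Ho →. T.obj A₁,
      (∀ y : S.obj Ro, attH (S.map mR y) = (attR y).map (T.map (PAttGHom.a mKm))) →
      (∀ x : S.obj Do, x ∉ Set.range (S.map (PAttGHom.g mKm)) →
        attH (S.map r₁ x) = attD x) →
      ∃ (mRp : (⟨Ro, A, attR⟩ : PAttGObj S T) ⟶ ⟨Ho, A₁, attH⟩)
        (r₁p : (⟨Do, A₁, attD⟩ : PAttGObj S T) ⟶ ⟨Ho, A₁, attH⟩),
        PAttGHom.g mRp = mR ∧ PAttGHom.a mRp = PAttGHom.a mKm ∧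
        PAttGHom.g r₁p = r₁ ∧ PAttGHom.a r₁p = 𝟙 A₁ ∧
        PAttGHom.Matching mRp ∧
        IsPushout rm mKm mRp r₁p := by
  obtain ⟨hmK_strict, hmK_inj⟩ := hmatch
  have hSpo := hpo.map S
  have hmR_inj : Function.Injective (S.map mR) :=
    Types.pushoutCocone_inr_injective_of_isColimit hSpo.flip.isColimit hmK_inj
  have hra : rm.a ≫ mKm.a = mKm.a := by rw [hrma, Category.id_comp]
  refine ⟨hmR_inj, funext fun k => (ConcreteCategory.congr_hom hSpo.w k).symm,
    Types.bijOn_compl_range_of_isPushout hSpo hmK_inj, fun attH hH₁ hH₂ => ?_⟩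
  let mR' : (⟨Ro, A, attR⟩ : PAttGObj S T) ⟶ ⟨Ho, A₁, attH⟩ :=
    ⟨mR, mKm.a, fun y t ht => by dsimp only; rw [hH₁]; exact Part.mem_map _ ht⟩
  let r₁' : (⟨Do, A₁, attD⟩ : PAttGObj S T) ⟶ ⟨Ho, A₁, attH⟩ :=
    ⟨r₁, 𝟙 A₁, fun x t ht => by
      simpa only [Functor.map_id_apply] using
        mem_att_glue_of_mem_att hH₁ hH₂ hmK_strict hra hpo.w ht⟩
  refine ⟨mR', r₁', rfl, rfl, rfl, rfl, ⟨hH₁, hmR_inj⟩, ?_⟩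
  exact isPushout_of_att_covered hpo (hrma ▸ IsPushout.id_horiz _)
    fun z t ht => att_glue_covered hH₁ hH₂ hSpo ht

end AttStruct
end

section
/- Suppose the projection functors U_𝐆 : PAttG ⥤ 𝐆 and U_𝐀 : PAttG ⥤ 𝐀 and the functors S : 𝐆 ⥤ Type and T : 𝐀 ⥤ Type all preserve pullbacks. Consider a pullback square in PAttG consisting of (l, b) : (K, A', att_K) → (L, A, att_L), (m_K, a') : (K, A', att_K) → (D, A'₁, att_D), (m_L, a) : (L, A, att_L) → (G, A₁, att_G) and (l₁, b₁) : (D, A'₁, att_D) → (G, A₁, att_G), with (m_L, a) ∘ (l, b) = (l₁, b₁) ∘ (m_K, a'). If (m_L, a) is a matching, then (m_K, a') is a matching and the preimage of the range of S(m_L) under S(l₁) is contained in the range of S(m_K). -/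
/-!
The projections preserve pullbacks, so `S(m_K)` is a pullback of the injective map `S(m_L)` in
`Type`; this gives injectivity of `S(m_K)` and the range condition. For strictness of `m_K`, an
attribute of `S(m_K) x` in `D` is sent by `l₁` to an attribute in `G`, which by strictness of `m_L`
is the image of an attribute of `S(l) x` in `L`; the pullback of attributes gives a common
preimage `t`. The structure `K` with `t` as the only attribute, at `x`, is then a cone over the
square, and its comparison map to `K` has identity components, so `t` is already an attribute of
`x` in `K`.
-/

open CategoryTheory CategoryTheory.Limits

universe w v u v' u'

namespace AttStruct

variable {𝒢 : Type u} [Category.{v} 𝒢] {𝒜 : Type u'} [Category.{v'} 𝒜]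

variable {S : 𝒢 ⥤ Type w} {T : 𝒜 ⥤ Type w}

abbrev PAttGObj.single (X : PAttGObj S T) (x : S.obj X.base) (t : T.obj X.attr) :
    PAttGObj S T :=
  ⟨X.base, X.attr, fun y ↦ ⟨y = x, fun _ ↦ t⟩⟩

def PAttGHom.fromSingle {X Y : PAttGObj S T} (f : X ⟶ Y) {x : S.obj X.base} {t : T.obj X.attr}
    (h : T.map f.a t ∈ Y.att (S.map f.g x)) : X.single x t ⟶ Y where
  g := f.g
  a := f.a
  cond := fun (y : S.obj X.base) s ⟨hy, hs⟩ ↦ by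
    subst hy hs
    exact h

variable {Kp Lp Dp Gp : PAttGObj S T}
  {lb : Kp ⟶ Lp} {mk : Kp ⟶ Dp} {mLm : Lp ⟶ Gp} {l1b : Dp ⟶ Gp}

lemma mem_att_of_isPullback_s2 (hpb : IsPullback lb mk mLm l1b)
    (hGb : IsPullback lb.g mk.g mLm.g l1b.g) (hAb : IsPullback lb.a mk.a mLm.a l1b.a)
    {x : S.obj Kp.base} {t : T.obj Kp.attr}
    (hL : T.map lb.a t ∈ Lp.att (S.map lb.g x)) (hD : T.map mk.a t ∈ Dp.att (S.map mk.g x)) :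
    t ∈ Kp.att x := by
  have hw : lb.fromSingle hL ≫ mLm = mk.fromSingle hD ≫ l1b :=
    PAttGHom.ext (congrArg PAttGHom.g hpb.w :) (congrArg PAttGHom.a hpb.w :)
  set u := hpb.lift _ _ hw
  have hg : u.g = 𝟙 Kp.base := hGb.hom_ext
    (by rw [Category.id_comp]; exact congrArg PAttGHom.g (hpb.lift_fst _ _ hw))
    (by rw [Category.id_comp]; exact congrArg PAttGHom.g (hpb.lift_snd _ _ hw))
  have ha : u.a = 𝟙 Kp.attr := hAb.hom_ext
    (by rw [Category.id_comp]; exact congrArg PAttGHom.a (hpb.lift_fst _ _ hw))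
    (by rw [Category.id_comp]; exact congrArg PAttGHom.a (hpb.lift_snd _ _ hw))
  simpa [hg, ha] using u.cond x t ⟨rfl, rfl⟩

lemma strict_of_isPullback (hpb : IsPullback lb mk mLm l1b)
    (hGb : IsPullback lb.g mk.g mLm.g l1b.g) (hAb : IsPullback lb.a mk.a mLm.a l1b.a)
    (hA : IsPullback (T.map lb.a) (T.map mk.a) (T.map mLm.a) (T.map l1b.a))
    (hm : mLm.Strict) : mk.Strict := by
  intro x
  ext tD
  refine ⟨fun htD ↦ ?_, fun htD ↦ ?_⟩
  · have hsq : S.map mLm.g (S.map lb.g x) = S.map l1b.g (S.map mk.g x) := by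
      simp only [← Functor.map_comp_apply, ← PAttGHom.comp_g, hpb.w]
    have hG := l1b.cond _ _ htD
    rw [← hsq, hm] at hG
    obtain ⟨tL, htL, hLG⟩ := (Part.mem_map_iff _).1 hG
    obtain ⟨tK, rfl, rfl⟩ := Types.exists_of_isPullback hA tL tD hLG
    exact Part.mem_map _ (mem_att_of_isPullback_s2 hpb hGb hAb htL htD)
  · obtain ⟨tK, htK, rfl⟩ := (Part.mem_map_iff _).1 htD
    exact mk.cond x tK htK

/-- In a pullback square in `PAttG`, if the morphism `mLm` is a matching then so is
`mk`, and the preimage under `S(l₁)` of the range of `S(m_L)` is contained in the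
range of `S(m_K)`. -/
theorem matching_of_isPullback
    [PreservesLimitsOfShape WalkingCospan (UG S T)]
    [PreservesLimitsOfShape WalkingCospan (UA S T)]
    [PreservesLimitsOfShape WalkingCospan S]
    [PreservesLimitsOfShape WalkingCospan T]
    (Kp Lp Dp Gp : PAttGObj S T)
    (lb : Kp ⟶ Lp) (mk : Kp ⟶ Dp) (mLm : Lp ⟶ Gp) (l1b : Dp ⟶ Gp)
    (hpb : IsPullback lb mk mLm l1b)
    (hm : PAttGHom.Matching mLm) :
    PAttGHom.Matching mk ∧
      S.map (PAttGHom.g l1b) ⁻¹' Set.range (S.map (PAttGHom.g mLm)) ⊆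
        Set.range (S.map (PAttGHom.g mk)) := by
  have hGb : IsPullback lb.g mk.g mLm.g l1b.g := hpb.map (UG S T)
  have hAb : IsPullback lb.a mk.a mLm.a l1b.a := hpb.map (UA S T)
  have hS := hGb.map S
  have hinj : Function.Injective (S.map mk.g) :=
    (mono_iff_injective _).1 (hS.mono_snd_of_mono ((mono_iff_injective _).2 hm.2))
  exact ⟨⟨strict_of_isPullback hpb hGb hAb (hAb.map T) hm.1, hinj⟩,
    (Types.range_snd_of_isPullback hS).ge⟩

end AttStruct
end

section
/- Suppose the projection functors U_𝐆 : PAttG ⥤ 𝐆 and U_𝐀 : PAttG ⥤ 𝐀 and the functors S : 𝐆 ⥤ Type and T : 𝐀 ⥤ Type all preserve pullbacks. Let (l, id_A) : (K, A, att_K) → (L, A, att_L) be a PAttG-morphism and (m_L, a) : (L, A, att_L) → (G, A₁, att_G) a matching; write C for the complement of the range of S(m_L) in S(G). Let m_K : K → D and l₁ : D → G form a final pullback complement of m_L along l in 𝐆. Then S(m_K) is injective and S(l₁) maps the complement C₁ of the range of S(m_K) in S(D) into C. Define att_D : S(D) ⇀ T(A₁) by att_D(S(m_K)(y)) = T(a)(att_K(y))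 for y ∈ dom(att_K), att_D(x) = att_G(S(l₁)(x)) for x ∈ C₁ with S(l₁)(x) ∈ dom(att_G), and undefined elsewhere. Then (m_K, a) : (K, A, att_K) → (D, A₁, att_D) is a matching, (l₁, id_{A₁}) : (D, A₁, att_D) → (G, A₁, att_G) is a PAttG-morphism, and the square given by (m_K, a) and (l₁, id_{A₁}) is a final pullback complement of (m_L, a) along (l, id_A) in PAttG. -/
open CategoryTheory CategoryTheory.Limits

universe w v u v' u'

namespace AttStruct

variable {𝒢 : Type u} [Category.{v} 𝒢] {𝒜 : Type u'} [Category.{v'} 𝒜]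

variable {S : 𝒢 ⥤ Type w} {T : 𝒜 ⥤ Type w}

section Pullbacks

variable {P X Y Z : PAttGObj S T} {fst : P ⟶ X} {snd : P ⟶ Y} {f : X ⟶ Z} {g : Y ⟶ Z}

lemma isPullback_g [PreservesLimitsOfShape WalkingCospan (UG S T)] (h : IsPullback fst snd f g) :
    IsPullback fst.g snd.g f.g g.g :=
  (UG S T).map_isPullback h

lemma isPullback_a [PreservesLimitsOfShape WalkingCospan (UA S T)] (h : IsPullback fst snd f g) :
    IsPullback fst.a snd.a f.a g.a :=
  (UA S T).map_isPullback h

lemma isPullback_of_strict_s3 [PreservesLimitsOfShape WalkingCospan T] (w : fst ≫ f = snd ≫ g)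
    (hg : IsPullback fst.g snd.g f.g g.g) (ha : IsPullback fst.a snd.a f.a g.a)
    (hsnd : snd.Strict) : IsPullback fst snd f g := by
  have lift_cond (s : PullbackCone f g) (x : S.obj s.pt.base) (t : T.obj s.pt.attr)
      (ht : t ∈ s.pt.att x) :
      let ug := hg.lift s.fst.g s.snd.g (congrArg PAttGHom.g s.condition)
      let ua := ha.lift s.fst.a s.snd.a (congrArg PAttGHom.a s.condition)
      T.map ua t ∈ P.att (S.map ug x) := by
    intro ug ua
    have hY : T.map snd.a (T.map ua t) ∈ Y.att (S.map snd.g (S.map ug x)) := by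
      rw [← Functor.map_comp_apply, ← Functor.map_comp_apply, ha.lift_snd, hg.lift_snd]
      exact s.snd.cond x t ht
    rw [hsnd, Part.mem_map_iff] at hY
    obtain ⟨t', ht', hsnd_eq⟩ := hY
    have hfst_eq : T.map fst.a t' = T.map fst.a (T.map ua t) := by
      refine Part.mem_unique (fst.cond _ t' ht') ?_
      rw [← Functor.map_comp_apply, ← Functor.map_comp_apply, ha.lift_fst, hg.lift_fst]
      exact s.fst.cond x t ht
    exact Types.ext_of_isPullback (T.map_isPullback ha) hfst_eq hsnd_eq ▸ ht'
  refine IsPullback.of_isLimit' ⟨w⟩ (PullbackCone.IsLimit.mk w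
    (fun s => ⟨_, _, lift_cond s⟩) (fun s => ?_) (fun s => ?_) (fun s m hfst hsnd => ?_))
  · exact PAttGHom.hom_ext (hg.lift_fst _ _ _) (ha.lift_fst _ _ _)
  · exact PAttGHom.hom_ext (hg.lift_snd _ _ _) (ha.lift_snd _ _ _)
  · exact PAttGHom.hom_ext
      (hg.hom_ext (by simpa using congrArg PAttGHom.g hfst) (by simpa using congrArg PAttGHom.g hsnd))
      (ha.hom_ext (by simpa using congrArg PAttGHom.a hfst) (by simpa using congrArg PAttGHom.a hsnd))

lemma mem_att_of_isPullback_s3 [PreservesLimitsOfShape WalkingCospan (UG S T)]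
    [PreservesLimitsOfShape WalkingCospan (UA S T)] (h : IsPullback fst snd f g)
    {p : S.obj P.base} {τ : T.obj P.attr} (hfst : T.map fst.a τ ∈ X.att (S.map fst.g p))
    (hsnd : T.map snd.a τ ∈ Y.att (S.map snd.g p)) : τ ∈ P.att p := by
  classical
  -- Adjoining `τ` at `p` gives a cone whose comparison map to `P` must be the identity.
  let P' : PAttGObj S T := ⟨P.base, P.attr, fun x => if x = p then Part.some τ else P.att x⟩
  let restrict {W : PAttGObj S T} (k : P ⟶ W) (hk : T.map k.a τ ∈ W.att (S.map k.g p)) :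
      P' ⟶ W :=
    PAttGHom.mk k.g k.a fun x t ht => by
      by_cases hx : x = p
      · subst x
        rw [show P'.att p = Part.some τ from if_pos rfl, Part.mem_some_iff] at ht
        exact ht ▸ hk
      · exact k.cond x t (by simpa [P', hx] using ht)
  have wg : fst.g ≫ f.g = snd.g ≫ g.g := congrArg PAttGHom.g h.w
  have wa : fst.a ≫ f.a = snd.a ≫ g.a := congrArg PAttGHom.a h.w
  have w : restrict fst hfst ≫ f = restrict snd hsnd ≫ g := PAttGHom.hom_ext wg wa
  let u := h.lift _ _ w
  have hug : u.g = 𝟙 P.base := (isPullback_g h).hom_ext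
    (by rw [Category.id_comp]; exact congrArg PAttGHom.g (h.lift_fst _ _ w))
    (by rw [Category.id_comp]; exact congrArg PAttGHom.g (h.lift_snd _ _ w))
  have hua : u.a = 𝟙 P.attr := (isPullback_a h).hom_ext
    (by rw [Category.id_comp]; exact congrArg PAttGHom.a (h.lift_fst _ _ w))
    (by rw [Category.id_comp]; exact congrArg PAttGHom.a (h.lift_snd _ _ w))
  have hτ := u.cond p τ (by simp [P'])
  rw [hug, hua, Functor.map_id_apply, Functor.map_id_apply] at hτ
  exact hτ

end Pullbacks

lemma injective_map_snd_of_isPullback {F : 𝒢 ⥤ Type w} [PreservesLimitsOfShape WalkingCospan F]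
    {P X Y Z : 𝒢} {fst : P ⟶ X} {snd : P ⟶ Y} {f : X ⟶ Z} {g : Y ⟶ Z}
    (h : IsPullback fst snd f g) (hf : Function.Injective (F.map f)) :
    Function.Injective (F.map snd) :=
  (mono_iff_injective _).1 <| (F.map_isPullback h).mono_snd_of_mono ((mono_iff_injective _).2 hf)

section Complement

variable {A A₁ : 𝒜} {Ko Lo Go Do : 𝒢} {attK : S.obj Ko →. T.obj A} {attL : S.obj Lo →. T.obj A}
  {attG : S.obj Go →. T.obj A₁} {attD : S.obj Do →. T.obj A₁}
  {lm : (⟨Ko, A, attK⟩ : PAttGObj S T) ⟶ ⟨Lo, A, attL⟩}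
  {mLm : (⟨Lo, A, attL⟩ : PAttGObj S T) ⟶ ⟨Go, A₁, attG⟩} {mK : Ko ⟶ Do} {l₁ : Do ⟶ Go}

lemma map_mem_att_of_mem_complement_att (hlma : lm.a = 𝟙 A)
    (w : lm.g ≫ mLm.g = mK ≫ l₁)
    (h1 : ∀ y, attD (S.map mK y) = (attK y).map (T.map mLm.a))
    (h2 : ∀ x ∉ Set.range (S.map mK), attD x = attG (S.map l₁ x))
    (x : S.obj Do) (t : T.obj A₁) (ht : t ∈ attD x) : T.map (𝟙 A₁) t ∈ attG (S.map l₁ x) := by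
  rw [Functor.map_id_apply]
  by_cases hx : x ∈ Set.range (S.map mK)
  · obtain ⟨y, rfl⟩ := hx
    rw [h1, Part.mem_map_iff] at ht
    obtain ⟨s, hs, rfl⟩ := ht
    have hsL : s ∈ attL (S.map lm.g y) := by simpa [hlma] using lm.cond y s hs
    rw [← Functor.map_comp_apply, ← w, Functor.map_comp_apply]
    exact mLm.cond _ s hsL
  · rwa [h2 x hx] at ht

section Final

variable [PreservesLimitsOfShape WalkingCospan (UG S T)]
  [PreservesLimitsOfShape WalkingCospan (UA S T)]
  [PreservesLimitsOfShape WalkingCospan S] [PreservesLimitsOfShape WalkingCospan T]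
  {K' D' : PAttGObj S T} {l' : K' ⟶ ⟨Lo, A, attL⟩} {m' : K' ⟶ D'} {l'₁ : D' ⟶ ⟨Go, A₁, attG⟩}
  {f : K' ⟶ ⟨Ko, A, attK⟩} {f₁ : D'.base ⟶ Do}

lemma map_mem_map_att_of_map_eq (hstrict : mLm.Strict)
    (hinjK : Function.Injective (S.map mK)) (w : lm.g ≫ mLm.g = mK ≫ l₁)
    (hpb : IsPullback l' m' mLm l'₁) (hfa : f.a = l'.a)
    (hf₁l : f₁ ≫ l₁ = l'₁.g) (hf₁m : m'.g ≫ f₁ = f.g ≫ mK)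
    {y : S.obj D'.base} {t : T.obj D'.attr} (ht : t ∈ D'.att y) {k : S.obj Ko}
    (hk : S.map mK k = S.map f₁ y) : T.map l'₁.a t ∈ (attK k).map (T.map mLm.a) := by
  have e1 : S.map mLm.g (S.map lm.g k) = S.map l'₁.g y := by
    rw [← hf₁l, Functor.map_comp_apply, ← hk, ← Functor.map_comp_apply, w,
      Functor.map_comp_apply]
  have hG := l'₁.cond y t ht
  rw [← e1, hstrict, Part.mem_map_iff] at hG
  obtain ⟨s, hs, hseq⟩ := hG
  obtain ⟨x', hx'l, hx'm⟩ :=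
    Types.exists_of_isPullback (S.map_isPullback (isPullback_g hpb)) _ _ e1
  obtain ⟨τ, hτl, hτm⟩ :=
    Types.exists_of_isPullback (T.map_isPullback (isPullback_a hpb)) _ _ hseq
  have hτ : τ ∈ K'.att x' :=
    mem_att_of_isPullback_s3 hpb (by rwa [hx'l, hτl]) (by rw [hx'm, hτm]; exact ht)
  have hfx : S.map f.g x' = k := hinjK <| by
    rw [hk, ← hx'm, ← Functor.map_comp_apply, ← Functor.map_comp_apply, hf₁m]
  have hfτ := f.cond x' τ hτ
  rw [hfx, hfa, hτl] at hfτ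
  exact Part.mem_map_iff _ |>.2 ⟨s, hfτ, hseq⟩

lemma map_mem_complement_att (hstrict : mLm.Strict)
    (hinjK : Function.Injective (S.map mK)) (w : lm.g ≫ mLm.g = mK ≫ l₁)
    (h1 : ∀ y, attD (S.map mK y) = (attK y).map (T.map mLm.a))
    (h2 : ∀ x ∉ Set.range (S.map mK), attD x = attG (S.map l₁ x))
    (hpb : IsPullback l' m' mLm l'₁) (hfa : f.a = l'.a)
    (hf₁l : f₁ ≫ l₁ = l'₁.g) (hf₁m : m'.g ≫ f₁ = f.g ≫ mK)
    (y : S.obj D'.base) (t : T.obj D'.attr) (ht : t ∈ D'.att y) :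
    T.map l'₁.a t ∈ attD (S.map f₁ y) := by
  by_cases hy : S.map f₁ y ∈ Set.range (S.map mK)
  · obtain ⟨k, hk⟩ := hy
    rw [← hk, h1]
    exact map_mem_map_att_of_map_eq hstrict hinjK w hpb hfa hf₁l hf₁m ht hk
  · rw [h2 _ hy, ← Functor.map_comp_apply, hf₁l]
    exact l'₁.cond y t ht

end Final

theorem isFPBC_of_isFPBC_g [PreservesLimitsOfShape WalkingCospan (UG S T)]
    [PreservesLimitsOfShape WalkingCospan (UA S T)]
    [PreservesLimitsOfShape WalkingCospan S] [PreservesLimitsOfShape WalkingCospan T]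
    (hlma : lm.a = 𝟙 A) (hmatch : mLm.Matching) (hfpbc : IsFPBC lm.g mLm.g mK l₁)
    (h1 : ∀ y, attD (S.map mK y) = (attK y).map (T.map mLm.a))
    (h2 : ∀ x ∉ Set.range (S.map mK), attD x = attG (S.map l₁ x))
    {mKp : (⟨Ko, A, attK⟩ : PAttGObj S T) ⟶ ⟨Do, A₁, attD⟩}
    {l₁p : (⟨Do, A₁, attD⟩ : PAttGObj S T) ⟶ ⟨Go, A₁, attG⟩}
    (hmKg : mKp.g = mK) (hmKa : mKp.a = mLm.a) (hl₁g : l₁p.g = l₁) (hl₁a : l₁p.a = 𝟙 A₁) :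
    IsFPBC lm mLm mKp l₁p := by
  subst hmKg hl₁g
  have hinjK := injective_map_snd_of_isPullback hfpbc.isPullback hmatch.2
  have w := hfpbc.isPullback.w
  refine ⟨isPullback_of_strict_s3 ?_ hfpbc.isPullback ?_ (fun y => hmKa ▸ h1 y), ?_⟩
  · exact PAttGHom.hom_ext w (by simp [hlma, hmKa, hl₁a])
  · rw [hlma, hmKa, hl₁a]
    exact IsPullback.of_id_fst
  intro K' D' l' m' l'₁ hpb f hf
  have hfa : f.a = l'.a := by simpa [hlma] using congrArg PAttGHom.a hf
  obtain ⟨f₁, ⟨hf₁l, hf₁m⟩, huniq⟩ :=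
    hfpbc.final _ _ _ (isPullback_g hpb) f.g (congrArg PAttGHom.g hf)
  have hpba : l'.a ≫ mLm.a = m'.a ≫ l'₁.a := congrArg PAttGHom.a hpb.w
  refine ⟨⟨f₁, l'₁.a, map_mem_complement_att hmatch.1 hinjK w h1 h2 hpb hfa hf₁l hf₁m⟩,
    ⟨PAttGHom.hom_ext hf₁l (by simp [hl₁a]), PAttGHom.hom_ext hf₁m (by simp [hmKa, hfa, hpba])⟩,
    fun f₁' ⟨hl, hm⟩ => PAttGHom.hom_ext (huniq _ ⟨congrArg PAttGHom.g hl, congrArg PAttGHom.g hm⟩)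
      (by simpa [hl₁a] using congrArg PAttGHom.a hl)⟩

end Complement

/-- Lifting final pullback complements to partially attributed structures: given a
rule morphism `(l, 𝟙 A)`, a matching `(m_L, a)` and a final pullback complement of
`m_L` along `l` in `𝒢`, `S(m_K)` is injective, `S(l₁)` maps the complement of the
range of `S(m_K)` into the complement of the range of `S(m_L)`, and for the
partial attribution `att_D` defined by `att_D(S(m_K)(y)) = T(a)(att_K(y))` and
`att_D(x) = att_G(S(l₁)(x))` for `x` outside the range of `S(m_K)` (undefined
elsewhere), `(m_K, a)` is a matching, `(l₁, 𝟙 A₁)` is a `PAttG`-morphism, and the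
resulting square is a final pullback complement in `PAttG`. -/
theorem fpbc_lifting
    [PreservesLimitsOfShape WalkingCospan (UG S T)]
    [PreservesLimitsOfShape WalkingCospan (UA S T)]
    [PreservesLimitsOfShape WalkingCospan S]
    [PreservesLimitsOfShape WalkingCospan T]
    (A A₁ : 𝒜) (Lo Ko Go Do : 𝒢)
    (attL : S.obj Lo →. T.obj A) (attK : S.obj Ko →. T.obj A)
    (attG : S.obj Go →. T.obj A₁)
    (lm : (⟨Ko, A, attK⟩ : PAttGObj S T) ⟶ ⟨Lo, A, attL⟩)
    (hlma : PAttGHom.a lm = 𝟙 A)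
    (mLm : (⟨Lo, A, attL⟩ : PAttGObj S T) ⟶ ⟨Go, A₁, attG⟩)
    (hmatch : PAttGHom.Matching mLm)
    (mK : Ko ⟶ Do) (l₁ : Do ⟶ Go)
    (hfpbc : IsFPBC (PAttGHom.g lm) (PAttGHom.g mLm) mK l₁) :
    Function.Injective (S.map mK) ∧
    (∀ x : S.obj Do, x ∉ Set.range (S.map mK) →
      S.map l₁ x ∉ Set.range (S.map (PAttGHom.g mLm))) ∧
    ∀ attD : S.obj Do →. T.obj A₁,
      (∀ y : S.obj Ko, attD (S.map mK y) = (attK y).map (T.map (PAttGHom.a mLm))) →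
      (∀ x : S.obj Do, x ∉ Set.range (S.map mK) → attD x = attG (S.map l₁ x)) →
      ∃ (mKp : (⟨Ko, A, attK⟩ : PAttGObj S T) ⟶ ⟨Do, A₁, attD⟩)
        (l₁p : (⟨Do, A₁, attD⟩ : PAttGObj S T) ⟶ ⟨Go, A₁, attG⟩),
        PAttGHom.g mKp = mK ∧ PAttGHom.a mKp = PAttGHom.a mLm ∧
        PAttGHom.g l₁p = l₁ ∧ PAttGHom.a l₁p = 𝟙 A₁ ∧
        PAttGHom.Matching mKp ∧
        IsFPBC lm mLm mKp l₁p := by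
  have hinjK := injective_map_snd_of_isPullback hfpbc.isPullback hmatch.2
  refine ⟨hinjK, fun x hx hl₁x => hx ?_, fun attD h1 h2 => ?_⟩
  · rwa [Types.range_snd_of_isPullback (S.map_isPullback hfpbc.isPullback)]
  let mKp : (⟨Ko, A, attK⟩ : PAttGObj S T) ⟶ ⟨Do, A₁, attD⟩ :=
    ⟨mK, mLm.a, fun y t ht => by dsimp only; rw [h1]; exact Part.mem_map _ ht⟩
  let l₁p : (⟨Do, A₁, attD⟩ : PAttGObj S T) ⟶ ⟨Go, A₁, attG⟩ :=
    ⟨l₁, 𝟙 A₁, map_mem_att_of_mem_complement_att hlma hfpbc.isPullback.w h1 h2⟩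
  exact ⟨mKp, l₁p, rfl, rfl, rfl, rfl, ⟨h1, hinjK⟩,
    isFPBC_of_isFPBC_g hlma hmatch hfpbc h1 h2 rfl rfl rfl rfl⟩

end AttStruct
end

section
/- In the category of types, for any types X, X', C and any function f : X' → X, the square with top f : X' → X, left Sum.inl : X → X ⊕ C, right Sum.inl : X' → X' ⊕ C and bottom Sum.map f id : X' ⊕ C → X ⊕ C is a final pullback complement of Sum.inl : X → X ⊕ C along f. -/
/-!
A pullback of `Sum.inl : X → X ⊕ C` along `l'₁ : D' → X ⊕ C` identifies `K'` with the part of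
`D'` lying over `X`. The comparison map `D' → X' ⊕ C` is therefore forced pointwise: on that
part it is `Sum.inl ∘ g`, and elsewhere it copies the `C`-component of `l'₁`.
-/

open CategoryTheory CategoryTheory.Limits

universe u

/-- A final pullback complement (FPBC) of `mL : L ⟶ G` along `l : K ⟶ L`: a pullback
square `mK : K ⟶ D`, `l₁ : D ⟶ G` such that every pullback of `mL` along some
`l' : K' ⟶ L` factors uniquely through it, compatibly with any `f : K' ⟶ K` over `L`. -/
structure IsFPBC {𝒞 : Type*} [Category 𝒞] {K L D G : 𝒞}
    (l : K ⟶ L) (mL : L ⟶ G) (mK : K ⟶ D) (l₁ : D ⟶ G) : Prop where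
  isPullback : IsPullback l mK mL l₁
  final : ∀ {K' D' : 𝒞} (l' : K' ⟶ L) (m' : K' ⟶ D') (l'₁ : D' ⟶ G),
    IsPullback l' m' mL l'₁ → ∀ f : K' ⟶ K, f ≫ l = l' →
      ∃! f₁ : D' ⟶ D, f₁ ≫ l₁ = l'₁ ∧ m' ≫ f₁ = f ≫ mK

theorem existsUnique_pi_of_forall_existsUnique {α : Sort*} {β : α → Sort*}
    {r : ∀ a, β a → Prop} (h : ∀ a, ∃! b, r a b) : ∃! f : ∀ a, β a, ∀ a, r a (f a) :=
  ⟨fun a => (h a).choose, fun a => (h a).choose_spec.1,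
    fun _ hf => funext fun a => (h a).unique (hf a) (h a).choose_spec.1⟩

theorem isPullback_inl_sumMap {X X' C C' : Type u} (f : X' → X) (g : C' → C) :
    IsPullback (TypeCat.ofHom f) (TypeCat.ofHom (Sum.inl : X' → X' ⊕ C'))
      (TypeCat.ofHom (Sum.inl : X → X ⊕ C)) (TypeCat.ofHom (Sum.map f g)) := by
  refine (Types.isPullback_iff _ _ _ _).2 ⟨rfl, fun _ _ h => Sum.inl_injective h.2, ?_⟩
  rintro x (x' | c) h
  · exact ⟨x', (Sum.inl_injective h).symm, rfl⟩
  · cases h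

theorem existsUnique_sumMap_eq_of_isPullback {X X' C K' D' : Type u} (f : X' → X)
    {l' : K' ⟶ X} {m' : K' ⟶ D'} {l'₁ : D' ⟶ X ⊕ C}
    (hpb : IsPullback l' m' (TypeCat.ofHom Sum.inl) l'₁) (g : K' → X')
    (hg : ∀ k, f (g k) = l' k) (d : D') :
    ∃! y : X' ⊕ C, Sum.map f id y = l'₁ d ∧ ∀ k, m' k = d → y = Sum.inl (g k) := by
  have hw (k : K') : l'₁ (m' k) = Sum.inl (l' k) := (types_congr_hom hpb.w k).symm
  rcases hd : l'₁ d with x | c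
  · obtain ⟨k, rfl, rfl⟩ := Types.exists_of_isPullback hpb x d hd.symm
    refine ⟨Sum.inl (g k), ⟨by simp [hg], fun k' hk' => ?_⟩, fun y hy => hy.2 k rfl⟩
    have hl' : l' k' = l' k := Sum.inl_injective ((hw k').symm.trans (hk' ▸ hw k))
    rw [Types.ext_of_isPullback hpb hl' hk']
  · refine ⟨Sum.inr c, ⟨rfl, fun k hk => ?_⟩, fun y hy => ?_⟩
    · cases (hw k).symm.trans (hk ▸ hd)
    · rcases y with x' | c'
      · cases hy.1
      · exact congrArg Sum.inr (Sum.inr_injective hy.1)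

/-- In types, the square with top `f`, coprojections on the sides and `Sum.map f id`
on the bottom is a final pullback complement of `Sum.inl` along `f`. -/
theorem isFPBC_inl_sumMap {X X' C : Type u} (f : X' → X) :
    IsFPBC (𝒞 := Type u) (TypeCat.ofHom f) (TypeCat.ofHom (Sum.inl : X → X ⊕ C))
      (TypeCat.ofHom (Sum.inl : X' → X' ⊕ C))
      (TypeCat.ofHom (Sum.map f id : X' ⊕ C → X ⊕ C)) := by
  refine ⟨isPullback_inl_sumMap f id, fun {K' D'} l' m' l'₁ hpb g hg => ?_⟩
  have hfactor := existsUnique_pi_of_forall_existsUnique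
    (existsUnique_sumMap_eq_of_isPullback f hpb g (types_congr_hom hg))
  refine TypeCat.homEquiv.existsUnique_congr (fun f₁ => ?_) |>.2 hfactor
  simp only [TypeCat.homEquiv_apply, forall_and, ConcreteCategory.hom_ext_iff, types_comp_apply,
    TypeCat.ofHom_apply]
  rw [@forall_comm D']
  simp only [forall_eq']
end

section
/- In any category, final pullback complements are unique up to isomorphism: if both (m_K : K → D, l₁ : D → G) and (m'_K : K → D', l'₁ : D' → G) are final pullback complements of a morphism m_L : L → G along a morphism l : K → L, then there exists an isomorphism h : D ≅ D' such that l'₁ ∘ h = l₁ and h ∘ m_K = m'_K. -/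
open CategoryTheory CategoryTheory.Limits

universe v u

namespace IsFPBC

variable {𝒞 : Type*} [Category 𝒞] {K L D D' G : 𝒞} {l : K ⟶ L} {mL : L ⟶ G}
  {mK : K ⟶ D} {l₁ : D ⟶ G} {mK' : K ⟶ D'} {l₁' : D' ⟶ G}

lemma exists_hom_of_isPullback (h : IsFPBC l mL mK l₁) (hp : IsPullback l mK' mL l₁') :
    ∃ f : D' ⟶ D, f ≫ l₁ = l₁' ∧ mK' ≫ f = mK := by
  obtain ⟨f, ⟨hf₁, hf₂⟩, -⟩ := h.final l mK' l₁' hp (𝟙 K) (Category.id_comp l)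
  exact ⟨f, hf₁, by simpa using hf₂⟩

lemma hom_ext_of_isPullback (h : IsFPBC l mL mK l₁) (hp : IsPullback l mK' mL l₁')
    {f g : D' ⟶ D} (hf₁ : f ≫ l₁ = l₁') (hf₂ : mK' ≫ f = mK) (hg₁ : g ≫ l₁ = l₁')
    (hg₂ : mK' ≫ g = mK) : f = g :=
  (h.final l mK' l₁' hp (𝟙 K) (Category.id_comp l)).unique
    ⟨hf₁, by simpa using hf₂⟩ ⟨hg₁, by simpa using hg₂⟩

lemma eq_id (h : IsFPBC l mL mK l₁) {f : D ⟶ D} (hf₁ : f ≫ l₁ = l₁) (hf₂ : mK ≫ f = mK) :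
    f = 𝟙 D :=
  h.hom_ext_of_isPullback h.isPullback hf₁ hf₂ (Category.id_comp _) (Category.comp_id _)

end IsFPBC

/-- Final pullback complements are unique up to isomorphism. -/
theorem isFPBC_unique_up_to_iso {𝒞 : Type u} [Category.{v} 𝒞] {K L D D' G : 𝒞}
    (l : K ⟶ L) (mL : L ⟶ G) (mK : K ⟶ D) (l₁ : D ⟶ G) (mK' : K ⟶ D') (l₁' : D' ⟶ G)
    (h : IsFPBC l mL mK l₁) (h' : IsFPBC l mL mK' l₁') :
    ∃ e : D ≅ D', e.hom ≫ l₁' = l₁ ∧ mK ≫ e.hom = mK' := by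
  obtain ⟨u, hu₁, hu₂⟩ := h'.exists_hom_of_isPullback h.isPullback
  obtain ⟨v, hv₁, hv₂⟩ := h.exists_hom_of_isPullback h'.isPullback
  have huv : u ≫ v = 𝟙 D :=
    h.eq_id (by rw [Category.assoc, hv₁, hu₁]) (by rw [← Category.assoc, hu₂, hv₂])
  have hvu : v ≫ u = 𝟙 D' :=
    h'.eq_id (by rw [Category.assoc, hu₁, hv₁]) (by rw [← Category.assoc, hv₂, hu₂])
  exact ⟨⟨u, v, huv, hvu⟩, hu₁, hu₂⟩
end

section
/- Suppose the category 𝐀 has an initial object A₀ such that the set T(A₀) is empty. Then the projection functor U_𝐆 : PAttG ⥤ 𝐆 has a left adjoint, namely the functor sending an object G of 𝐆 to the partially attributed structure (G, A₀, ∅) whose attribution partial function is nowhere defined, and sending a morphism g : G → G' to (g, id_{A₀}). Consequently U_𝐆 preserves all limits, and in particular pullbacks. -/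
open CategoryTheory CategoryTheory.Limits

universe w v u v' u'

namespace AttStruct

variable {𝒢 : Type u} [Category.{v} 𝒢] {𝒜 : Type u'} [Category.{v'} 𝒜]

variable {S : 𝒢 ⥤ Type w} {T : 𝒜 ⥤ Type w}

/-- The functor sending `G` to the partially attributed structure `(G, A₀, ∅)`
with nowhere-defined attribution, and `g` to `(g, 𝟙 A₀)`. -/
def FreeG (S : 𝒢 ⥤ Type w) (T : 𝒜 ⥤ Type w) (A₀ : 𝒜) : 𝒢 ⥤ PAttGObj S T where
  obj Go := ⟨Go, A₀, fun _ => Part.none⟩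
  map g := ⟨g, 𝟙 A₀, fun _ t ht => absurd ht (Part.notMem_none t)⟩
  map_id _ := by apply PAttGHom.ext <;> simp
  map_comp _ _ := by apply PAttGHom.ext <;> simp

section

variable {A₀ : 𝒜} (hinit : IsInitial A₀)

/-- The empty attribution makes the morphism condition vacuous, and initiality of `A₀` fixes the
`𝒜`-component, so a morphism out of `(G, A₀, ∅)` is just its `𝒢`-component. -/
def freeGHomEquiv (G : 𝒢) (X : PAttGObj S T) : ((FreeG S T A₀).obj G ⟶ X) ≃ (G ⟶ X.base) where
  toFun f := f.g
  invFun g := ⟨g, hinit.to X.attr, fun _ t ht => absurd ht (Part.notMem_none t)⟩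
  left_inv _ := PAttGHom.ext rfl (hinit.hom_ext _ _)
  right_inv _ := rfl

def freeGAdjunction : FreeG S T A₀ ⊣ UG S T :=
  Adjunction.mkOfHomEquiv
    { homEquiv := freeGHomEquiv hinit
      homEquiv_naturality_left_symm := fun _ _ => PAttGHom.ext rfl (hinit.hom_ext _ _)
      homEquiv_naturality_right := fun _ _ => rfl }

end

universe w₂ w₁

theorem UG_hasLeftAdjoint_and_preservesLimits_general
    (S : 𝒢 ⥤ Type w) (T : 𝒜 ⥤ Type w) (A₀ : 𝒜)
    (hinit : IsInitial A₀) :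
    Nonempty (FreeG S T A₀ ⊣ UG S T) ∧
      Nonempty (PreservesLimitsOfSize.{w₂, w₁} (UG S T)) ∧
      Nonempty (PreservesLimitsOfShape WalkingCospan (UG S T)) := by
  let adj : FreeG S T A₀ ⊣ UG S T := freeGAdjunction hinit
  exact ⟨⟨adj⟩, ⟨adj.rightAdjoint_preservesLimits⟩,
    ⟨adj.rightAdjoint_preservesLimits.{0, 0}.preservesLimitsOfShape⟩⟩

/-- If `𝒜` has an initial object `A₀` with `T(A₀)` empty, then the projection
functor `U_𝒢 : PAttG ⥤ 𝒢` has `FreeG S T A₀` as a left adjoint; consequently it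
preserves all limits, in particular pullbacks. -/
theorem UG_hasLeftAdjoint_and_preservesLimits
    (S : 𝒢 ⥤ Type w) (T : 𝒜 ⥤ Type w) (A₀ : 𝒜)
    (hinit : IsInitial A₀) (hempty : IsEmpty (T.obj A₀)) :
    Nonempty (FreeG S T A₀ ⊣ UG S T) ∧
      Nonempty (PreservesLimitsOfSize.{w₂, w₁} (UG S T)) ∧
      Nonempty (PreservesLimitsOfShape WalkingCospan (UG S T)) :=
  UG_hasLeftAdjoint_and_preservesLimits_general S T A₀ hinit

end AttStruct
end

section
/- Suppose the category 𝐆 has an initial object G₀ such that the set S(G₀) is empty. Then the projection functor U_𝐀 : PAttG ⥤ 𝐀 has a left adjoint, namely the functor sending an object A of 𝐀 to the partially attributed structure (G₀, A, ∅) whose attribution partial function is nowhere defined, and sending a morphism a : A → A' to (id_{G₀}, a). Consequently U_𝐀 preserves all limits, and in particular pullbacks. -/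
open CategoryTheory CategoryTheory.Limits

universe w v u v' u'

namespace AttStruct

variable {𝒢 : Type u} [Category.{v} 𝒢] {𝒜 : Type u'} [Category.{v'} 𝒜]

variable {S : 𝒢 ⥤ Type w} {T : 𝒜 ⥤ Type w}

/-- The functor sending `A` to the partially attributed structure `(G₀, A, ∅)`
with nowhere-defined attribution, and `a` to `(𝟙 G₀, a)`. -/
def FreeA (S : 𝒢 ⥤ Type w) (T : 𝒜 ⥤ Type w) (G₀ : 𝒢) : 𝒜 ⥤ PAttGObj S T where
  obj Ao := ⟨G₀, Ao, fun _ => Part.none⟩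
  map a := ⟨𝟙 G₀, a, fun _ t ht => absurd ht (Part.notMem_none t)⟩
  map_id _ := by apply PAttGHom.ext <;> simp
  map_comp _ _ := by apply PAttGHom.ext <;> simp

universe w₂ w₁

/-! A morphism out of `(G₀, A, ∅)` has its structure component forced by initiality of `G₀`,
and its attribution condition is vacuous because `S(G₀)` is empty, so it amounts to an arbitrary
`a : A ⟶ A'`. Limit preservation is then that of any right adjoint. -/

def FreeA.homMk {G₀ : 𝒢} (hinit : IsInitial G₀) (hempty : IsEmpty (S.obj G₀)) {A : 𝒜}
    {X : PAttGObj S T} (a : A ⟶ X.attr) : (FreeA S T G₀).obj A ⟶ X :=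
  ⟨hinit.to X.base, a, fun x _ _ => hempty.elim x⟩

lemma FreeA.hom_ext {G₀ : 𝒢} (hinit : IsInitial G₀) {A : 𝒜} {X : PAttGObj S T}
    {f f' : (FreeA S T G₀).obj A ⟶ X} (h : f.a = f'.a) : f = f' :=
  PAttGHom.ext (hinit.hom_ext _ _) h

def FreeA.homEquiv {G₀ : 𝒢} (hinit : IsInitial G₀) (hempty : IsEmpty (S.obj G₀)) (A : 𝒜)
    (X : PAttGObj S T) : ((FreeA S T G₀).obj A ⟶ X) ≃ (A ⟶ (UA S T).obj X) where
  toFun f := f.a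
  invFun := FreeA.homMk hinit hempty
  left_inv _ := FreeA.hom_ext hinit rfl
  right_inv _ := rfl

def FreeA.adjunction {G₀ : 𝒢} (hinit : IsInitial G₀) (hempty : IsEmpty (S.obj G₀)) :
    FreeA S T G₀ ⊣ UA S T :=
  Adjunction.mkOfHomEquiv
    { homEquiv := FreeA.homEquiv hinit hempty
      homEquiv_naturality_left_symm := fun _ _ => FreeA.hom_ext hinit rfl
      homEquiv_naturality_right := fun _ _ => rfl }

/-- If `𝒢` has an initial object `G₀` with `S(G₀)` empty, then the projection
functor `U_𝒜 : PAttG ⥤ 𝒜` has `FreeA S T G₀` as a left adjoint; consequently it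
preserves all limits, in particular pullbacks. -/
theorem UA_hasLeftAdjoint_and_preservesLimits
    (S : 𝒢 ⥤ Type w) (T : 𝒜 ⥤ Type w) (G₀ : 𝒢)
    (hinit : IsInitial G₀) (hempty : IsEmpty (S.obj G₀)) :
    Nonempty (FreeA S T G₀ ⊣ UA S T) ∧
      Nonempty (PreservesLimitsOfSize.{w₂, w₁} (UA S T)) ∧
      Nonempty (PreservesLimitsOfShape WalkingCospan (UA S T)) := by
  have adj : FreeA S T G₀ ⊣ UA S T := FreeA.adjunction hinit hempty
  exact ⟨⟨adj⟩, ⟨adj.rightAdjoint_preservesLimits⟩,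
    ⟨adj.rightAdjoint_preservesLimits.preservesLimitsOfShape⟩⟩

end AttStruct
end
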